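/- Basic inequality for the debiasing-step lasso: Let X ∈ ℝ^{n×p}, ỹ ∈ ℝ^n, λ₂ > 0, and β^{(0)}, β̄, δ* ∈ ℝ^p; set û = β̄ − (β^{(0)} + δ*) and Σ̂ = X^⊤X/n. Let δ̂ be a minimizer over ℝ^p of G(δ) = (1/(2n))‖ỹ − X(β̄ − δ)‖₂² + λ₂‖δ‖₁, and set v̂ = δ̂ − δ*. If ‖(1/n) X^⊤(ỹ − Xβ^{(0)})‖∞ ≤ λ₂/2, then (1/4) v̂^⊤ Σ̂ v̂ ≤ 2λ₂‖δ*‖₁ − (λ₂/2)‖v̂‖₁ + û^⊤ Σ̂ û. -/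

import Mathlib

/-!
Expanding the least-squares loss around `δstar` turns the minimality of `δhat` against `δstar`
into `⟨g − Σ̂û, v̂⟩ + ½ v̂ᵀΣ̂v̂ ≤ λ₂(‖δstar‖₁ − ‖δhat‖₁)`, where `g = (1/n)Xᵀ(ỹ − Xβ^{(0)})`.
On `E₂` Hölder gives `⟨g, v̂⟩ ≥ −(λ₂/2)‖v̂‖₁`, positive semidefiniteness of `Σ̂` gives
`ûᵀΣ̂v̂ ≤ ûᵀΣ̂û + ¼ v̂ᵀΣ̂v̂`, and `‖δhat‖₁ ≥ ‖v̂‖₁ − ‖δstar‖₁` finishes.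
-/

open Matrix Finset

noncomputable section

def l1 {ι : Type*} [Fintype ι] (v : ι → ℝ) : ℝ := ∑ j, |v j|
def l2sq {ι : Type*} [Fintype ι] (v : ι → ℝ) : ℝ := ∑ j, (v j) ^ 2
def linf {ι : Type*} [Fintype ι] (v : ι → ℝ) : ℝ := ⨆ j, |v j|

section Norms

variable {ι : Type*} [Fintype ι]

lemma l2sq_eq_dotProduct_self (v : ι → ℝ) : l2sq v = v ⬝ᵥ v := by
  simp only [l2sq, dotProduct, sq]

lemma l1_nonneg (v : ι → ℝ) : 0 ≤ l1 v :=
  Finset.sum_nonneg fun j _ => abs_nonneg (v j)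

lemma l1_sub_le (x y : ι → ℝ) : l1 (x - y) ≤ l1 x + l1 y := by
  rw [l1, l1, l1, ← Finset.sum_add_distrib]
  exact Finset.sum_le_sum fun j _ => abs_sub (x j) (y j)

lemma linf_nonneg (w : ι → ℝ) : 0 ≤ linf w :=
  Real.iSup_nonneg fun j => abs_nonneg (w j)

lemma abs_le_linf (w : ι → ℝ) (j : ι) : |w j| ≤ linf w :=
  le_ciSup (Set.finite_range fun j => |w j|).bddAbove j

lemma abs_dotProduct_le_linf_mul_l1 (w v : ι → ℝ) : |w ⬝ᵥ v| ≤ linf w * l1 v := by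
  rw [dotProduct, l1, Finset.mul_sum]
  refine (Finset.abs_sum_le_sum_abs _ _).trans (Finset.sum_le_sum fun j _ => ?_)
  rw [abs_mul]
  exact mul_le_mul_of_nonneg_right (abs_le_linf w j) (abs_nonneg _)

end Norms

lemma Matrix.PosSemidef.dotProduct_mulVec_comm {ι : Type*} [Fintype ι] {S : Matrix ι ι ℝ}
    (hS : S.PosSemidef) (u v : ι → ℝ) : v ⬝ᵥ S *ᵥ u = u ⬝ᵥ S *ᵥ v := by
  have hT : Sᵀ = S := by
    simpa only [IsHermitian, conjTranspose_eq_transpose_of_trivial] using hS.isHermitian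
  rw [dotProduct_mulVec, ← mulVec_transpose, hT, dotProduct_comm]

lemma Matrix.PosSemidef.dotProduct_mulVec_le {ι : Type*} [Fintype ι] {S : Matrix ι ι ℝ}
    (hS : S.PosSemidef) (u v : ι → ℝ) :
    u ⬝ᵥ S *ᵥ v ≤ u ⬝ᵥ S *ᵥ u + 1 / 4 * (v ⬝ᵥ S *ᵥ v) := by
  have h := hS.dotProduct_mulVec_nonneg (u - (1 / 2 : ℝ) • v)
  simp only [star_trivial, mulVec_sub, mulVec_smul, dotProduct_sub, sub_dotProduct,
    dotProduct_smul, smul_dotProduct, smul_eq_mul] at h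
  linarith [hS.dotProduct_mulVec_comm u v]

lemma smul_l2sq_sub_mulVec_sub {m k : Type*} [Fintype m] [Fintype k] (c : ℝ)
    (X : Matrix m k ℝ) (y : m → ℝ) (β v : k → ℝ) :
    c / 2 * l2sq (y - X *ᵥ (β - v)) =
      c / 2 * l2sq (y - X *ᵥ β) + (c • (Xᵀ *ᵥ (y - X *ᵥ β))) ⬝ᵥ v
        + 1 / 2 * (v ⬝ᵥ (c • (Xᵀ * X)) *ᵥ v) := by
  have hres : y - X *ᵥ (β - v) = (y - X *ᵥ β) + X *ᵥ v := by
    rw [mulVec_sub]; abel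
  have hcross : (Xᵀ *ᵥ (y - X *ᵥ β)) ⬝ᵥ v = (y - X *ᵥ β) ⬝ᵥ X *ᵥ v := by
    rw [mulVec_transpose, dotProduct_mulVec]
  have hquad : v ⬝ᵥ (Xᵀ * X) *ᵥ v = (X *ᵥ v) ⬝ᵥ X *ᵥ v := by
    rw [← mulVec_mulVec, dotProduct_mulVec, vecMul_transpose]
  simp only [l2sq_eq_dotProduct_self, hres, add_dotProduct, dotProduct_add, smul_mulVec,
    smul_dotProduct, dotProduct_smul, smul_eq_mul, hcross, hquad, dotProduct_comm (X *ᵥ v)]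
  ring

theorem debias_lasso_basic_inequality_general
    {n p : ℕ} (X : Matrix (Fin n) (Fin p) ℝ) (ytil : Fin n → ℝ)
    (lam2 : ℝ)
    (β0 βbar δstar δhat : Fin p → ℝ)
    (hmin : ∀ δ : Fin p → ℝ,
      (1 / (2 * (n : ℝ))) * l2sq (ytil - X *ᵥ (βbar - δhat)) + lam2 * l1 δhat ≤
      (1 / (2 * (n : ℝ))) * l2sq (ytil - X *ᵥ (βbar - δ)) + lam2 * l1 δ)
    (hE2 : linf ((n : ℝ)⁻¹ • (Xᵀ *ᵥ (ytil - X *ᵥ β0))) ≤ lam2 / 2) :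
    (1 / 4) * ((δhat - δstar) ⬝ᵥ (((n : ℝ)⁻¹ • (Xᵀ * X)) *ᵥ (δhat - δstar))) ≤
      2 * lam2 * l1 δstar - (lam2 / 2) * l1 (δhat - δstar)
      + (βbar - (β0 + δstar)) ⬝ᵥ (((n : ℝ)⁻¹ • (Xᵀ * X)) *ᵥ (βbar - (β0 + δstar))) := by
  set c : ℝ := (n : ℝ)⁻¹
  set S := c • (Xᵀ * X)
  set g := c • (Xᵀ *ᵥ (ytil - X *ᵥ β0))
  set u := βbar - (β0 + δstar)
  set v := δhat - δstar
  have hgrad : c • (Xᵀ *ᵥ (ytil - X *ᵥ (βbar - δstar))) = g - S *ᵥ u := by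
    rw [show βbar - δstar = β0 + u by simp only [u]; abel, mulVec_add, sub_add_eq_sub_sub,
      mulVec_sub, smul_sub, smul_mulVec, mulVec_mulVec]
  have hbasic : (g - S *ᵥ u) ⬝ᵥ v + 1 / 2 * (v ⬝ᵥ S *ᵥ v) ≤ lam2 * l1 δstar - lam2 * l1 δhat := by
    have h := hmin δstar
    rw [show βbar - δhat = βbar - δstar - v by simp only [v]; abel, one_div, mul_inv,
      ← div_eq_inv_mul, smul_l2sq_sub_mulVec_sub, hgrad] at h
    linarith
  have hholder : -(lam2 / 2 * l1 v) ≤ g ⬝ᵥ v :=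
    neg_le_of_abs_le ((abs_dotProduct_le_linf_mul_l1 g v).trans
      (mul_le_mul_of_nonneg_right hE2 (l1_nonneg v)))
  have hS : S.PosSemidef :=
    (posSemidef_conjTranspose_mul_self X).smul (inv_nonneg.mpr n.cast_nonneg)
  have hpsd : u ⬝ᵥ S *ᵥ v ≤ u ⬝ᵥ S *ᵥ u + 1 / 4 * (v ⬝ᵥ S *ᵥ v) := hS.dotProduct_mulVec_le u v
  have hlam2 : 0 ≤ lam2 := by linarith [linf_nonneg g]
  have htriangle : lam2 * l1 v ≤ lam2 * (l1 δhat + l1 δstar) :=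
    mul_le_mul_of_nonneg_left (l1_sub_le δhat δstar) hlam2
  rw [sub_dotProduct, dotProduct_comm (S *ᵥ u), hS.dotProduct_mulVec_comm] at hbasic
  linarith

theorem debias_lasso_basic_inequality
    {n p : ℕ} (X : Matrix (Fin n) (Fin p) ℝ) (ytil : Fin n → ℝ)
    (lam2 : ℝ) (hlam2 : 0 < lam2)
    (β0 βbar δstar δhat : Fin p → ℝ)
    (hmin : ∀ δ : Fin p → ℝ,
      (1 / (2 * (n : ℝ))) * l2sq (ytil - X *ᵥ (βbar - δhat)) + lam2 * l1 δhat ≤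
      (1 / (2 * (n : ℝ))) * l2sq (ytil - X *ᵥ (βbar - δ)) + lam2 * l1 δ)
    (hE2 : linf ((n : ℝ)⁻¹ • (Xᵀ *ᵥ (ytil - X *ᵥ β0))) ≤ lam2 / 2) :
    (1 / 4) * ((δhat - δstar) ⬝ᵥ (((n : ℝ)⁻¹ • (Xᵀ * X)) *ᵥ (δhat - δstar))) ≤
      2 * lam2 * l1 δstar - (lam2 / 2) * l1 (δhat - δstar)
      + (βbar - (β0 + δstar)) ⬝ᵥ (((n : ℝ)⁻¹ • (Xᵀ * X)) *ᵥ (βbar - (β0 + δstar))) :=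
  debias_lasso_basic_inequality_general X ytil lam2 β0 βbar δstar δhat hmin hE2

end
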